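/- arXiv:1501.02404 — 3 statements merged into one kernel-verified Lean document; each statement's English description precedes it below -/
import Mathlib

section
/- Let C be a finite partially ordered set with an order-reversing map g : C → C such that C is a single m-cycle of g (i.e., there is c ∈ C with C = {c, g(c), …, g^{m-1}(c)} and g^m(c) = c, with these m elements distinct) where m is even. Then there is a surjective map φ : C → {0,1} that is order-preserving (with 0 < 1 on the target) and satisfies φ(g(x)) = φ(x)' for all x, where ' is Boolean complement. -/
/-- If a finite poset `C` with an order-reversing map `g` is a single even `m`-cycle
of `g`, then there is a surjective order-preserving map `φ : C → {0,1}` with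
`φ (g x) = (φ x)'`. -/
theorem stmt_3 {C : Type*} [Fintype C] [PartialOrder C] (g : C → C)
    (hg : ∀ x y : C, x ≤ y → g y ≤ g x)
    (m : ℕ) (hm : Even m) (hm0 : 0 < m)
    (c : C) (hcyc : g^[m] c = c)
    (hinj : ∀ i < m, ∀ j < m, g^[i] c = g^[j] c → i = j)
    (hsurj : ∀ x : C, ∃ k < m, x = g^[k] c) :
    ∃ φ : C → Bool, Function.Surjective φ ∧ (∀ x y : C, x ≤ y → φ x ≤ φ y) ∧
      ∀ x : C, φ (g x) = !(φ x) := by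
  classical
  have hm2 : m % 2 = 0 := Nat.even_iff.mp hm
  choose k hk hx using hsurj
  -- shifting by m is the identity on c
  have hshift : ∀ j, g^[j + m] c = g^[j] c := by
    intro j
    rw [Function.iterate_add_apply, hcyc]
  -- g^[m] fixes everything
  have hfix : ∀ x : C, g^[m] x = x := by
    intro x
    conv_lhs => rw [hx x, ← Function.iterate_add_apply]
    rw [Nat.add_comm, hshift, ← hx x]
  -- g is surjective hence injective
  have hgsurj : Function.Surjective g := by
    intro y
    rcases Nat.eq_zero_or_pos (k y) with h0 | hpos
    · refine ⟨g^[m - 1] c, ?_⟩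
      have : g (g^[m - 1] c) = g^[m - 1 + 1] c := (Function.iterate_succ_apply' g (m-1) c).symm
      rw [this, Nat.sub_add_cancel hm0, hcyc, hx y, h0, Function.iterate_zero_apply]
    · refine ⟨g^[k y - 1] c, ?_⟩
      have : g (g^[k y - 1] c) = g^[k y - 1 + 1] c := (Function.iterate_succ_apply' g (k y - 1) c).symm
      rw [this, Nat.sub_add_cancel hpos, ← hx y]
  have hginj : Function.Injective g := (Finite.injective_iff_surjective).mpr hgsurj
  have hgit : ∀ n, Function.Injective (g^[n]) := fun n => Function.Injective.iterate hginj n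
  -- even iterates are monotone
  have heven : ∀ n (x y : C), x ≤ y → g^[2 * n] x ≤ g^[2 * n] y := by
    intro n
    induction n with
    | zero => simp
    | succ p ih =>
      intro x y h
      have h2 : (g^[2 * (p + 1)]) x = g^[2 * p] (g^[2] x) := by
        rw [← Function.iterate_add_apply]; ring_nf
      have h2' : (g^[2 * (p + 1)]) y = g^[2 * p] (g^[2] y) := by
        rw [← Function.iterate_add_apply]; ring_nf
      rw [h2, h2']
      exact ih _ _ (hg _ _ (hg _ _ h))
  -- no strict increase along even iterates
  have hC : ∀ (x : C) (n : ℕ), x < g^[2 * n] x → False := by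
    intro x n hlt
    have hstep : ∀ j : ℕ, g^[2 * n * j] x < g^[2 * n * (j + 1)] x := by
      intro j
      have hle : g^[2 * (n * j)] x ≤ g^[2 * (n * j)] (g^[2 * n] x) :=
        heven (n * j) _ _ (le_of_lt hlt)
      have hne : (g^[2 * (n * j)]) x ≠ g^[2 * (n * j)] (g^[2 * n] x) :=
        fun h => (ne_of_lt hlt) (hgit _ h)
      have e1 : 2 * n * j = 2 * (n * j) := by ring
      have e2 : g^[2 * (n * j)] (g^[2 * n] x) = g^[2 * n * (j + 1)] x := by
        rw [← Function.iterate_add_apply]; ring_nf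
      rw [e1, ← e2]
      exact lt_of_le_of_ne hle hne
    have hchain : ∀ j : ℕ, x < g^[2 * n * (j + 1)] x := by
      intro j
      induction j with
      | zero => simpa using hstep 0
      | succ p ih => exact lt_trans ih (hstep (p + 1))
    have hj := hchain (m - 1)
    have hme : 2 * n * (m - 1 + 1) = m * (2 * n) := by
      rw [Nat.sub_add_cancel hm0]; ring
    rw [hme, Function.iterate_mul] at hj
    rw [Function.iterate_fixed (hfix x) (2 * n)] at hj
    exact lt_irrefl x hj
  -- comparable same-parity elements are equal
  have hD : ∀ x y : C, x ≤ y → k x % 2 = k y % 2 → x = y := by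
    intro x y hxy hpar
    by_contra hne
    have hlt : x < y := lt_of_le_of_ne hxy hne
    set δ := k y + m - k x with hδ
    have hkxm : k x < m := hk x
    have heq : y = g^[δ] x := by
      rw [hx x, ← Function.iterate_add_apply]
      have : δ + k x = k y + m := by omega
      rw [this, hshift, ← hx y]
    have hδ2 : δ % 2 = 0 := by omega
    obtain ⟨n, hn⟩ : ∃ n, δ = 2 * n := ⟨δ / 2, by omega⟩
    rw [heq, hn] at hlt
    exact hC x n hlt
  -- parity flips under g
  have hpar : ∀ x : C, k (g x) % 2 = (k x + 1) % 2 := by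
    intro x
    have h1 : g x = g^[k x + 1] c := by
      rw [Function.iterate_succ_apply', ← hx]
    rcases Nat.lt_or_ge (k x + 1) m with hcase | hcase
    · have := hinj (k (g x)) (hk _) (k x + 1) hcase (by rw [← hx (g x), h1])
      omega
    · have hme : k x + 1 = m := by have := hk x; omega
      have hgc : g x = c := by rw [h1, hme, hcyc]
      have h0 : k (g x) = 0 := hinj (k (g x)) (hk _) 0 hm0
        (by rw [← hx (g x), hgc, Function.iterate_zero_apply])
      omega
  -- parity of iterated shifts
  have hpariter : ∀ (j : ℕ) (x : C), k (g^[j] x) % 2 = (k x + j) % 2 := by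
    intro j
    induction j with
    | zero => intro x; simp
    | succ p ih =>
      intro x
      rw [Function.iterate_succ_apply']
      have h1 := hpar (g^[p] x)
      have h2 := ih x
      omega
  set par : C → Bool := fun x => decide (k x % 2 = 1) with hpardef
  have hflip : ∀ x : C, par (g x) = !(par x) := by
    intro x
    have := hpar x
    simp only [hpardef]
    rcases Nat.mod_two_eq_zero_or_one (k x) with h | h <;> simp [h] <;> omega
  -- one of the two orientations is monotone
  have hkey : (∀ x y : C, x ≤ y → par x ≤ par y) ∨
      (∀ x y : C, x ≤ y → ((!(par x)) ≤ (!(par y)))) := by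
    by_contra hcon
    push_neg at hcon
    obtain ⟨⟨x, y, hxy, hxyb⟩, ⟨u, v, huv, huvb⟩⟩ := hcon
    rw [Bool.lt_iff] at hxyb huvb
    obtain ⟨hyF, hxT⟩ := hxyb
    obtain ⟨hvF', huT'⟩ := huvb
    have hvT : par v = true := by revert hvF'; cases par v <;> simp
    have huF : par u = false := by revert huT'; cases par u <;> simp
    simp only [hpardef, decide_eq_true_eq, decide_eq_false_iff_not] at hxT hyF huF hvT
    have hkx : k x % 2 = 1 := hxT
    have hky : k y % 2 = 0 := by omega
    have hku : k u % 2 = 0 := by omega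
    have hkv : k v % 2 = 1 := hvT
    set s := k x + m - k v with hs
    have hkvm : k v < m := hk v
    have hsv : g^[s] v = x := by
      rw [hx v, ← Function.iterate_add_apply]
      have : s + k v = k x + m := by omega
      rw [this, hshift, ← hx x]
    have hs2 : s % 2 = 0 := by omega
    obtain ⟨n, hn⟩ : ∃ n, s = 2 * n := ⟨s / 2, by omega⟩
    have hle : g^[s] u ≤ x := by
      rw [← hsv, hn]; exact heven n _ _ huv
    have hwpar : k (g^[s] u) % 2 = k y % 2 := by
      rw [hpariter]; omega
    have hwy : g^[s] u = y := hD _ _ (le_trans hle hxy) hwpar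
    have hxey : x = y := le_antisymm hxy (hwy ▸ hle)
    rw [hxey] at hkx
    omega
  -- assemble
  rcases hkey with hmono | hmono
  · refine ⟨par, ?_, hmono, hflip⟩
    intro b
    by_cases hb : par c = b
    · exact ⟨c, hb⟩
    · exact ⟨g c, by rw [hflip]; revert hb; cases par c <;> cases b <;> simp⟩
  · refine ⟨fun z => !(par z), ?_, hmono, fun x => by
      show (!(par (g x))) = !(!(par x)); rw [hflip]⟩
    intro b
    by_cases hb : (!(par c)) = b
    · exact ⟨c, hb⟩
    · refine ⟨g c, ?_⟩
      show (!(par (g c))) = b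
      rw [hflip]
      revert hb; cases par c <;> cases b <;> simp
end

section
/- With notation as above (m odd, S_m the order-preserving maps D_m → {0,1}, u(α) = α ∘ g, and ≼ defined by α ≼ β iff α(0) ≤ β(0) and α agrees with β off 0): every α ∈ S_m satisfies α ≼ u^m(α). -/
/-- The order on `D_m = {0,…,m}` whose only nontrivial relation is `0 ≤ m`. -/
def Dle (m : ℕ) (x y : Fin (m + 1)) : Prop := x = y ∨ (x = 0 ∧ y = Fin.last m)

/-- The map `g` on `D_m` with `g 0 = 1`, `g m = 1`, `g i = i + 1` otherwise. -/
def gD (m : ℕ) (x : Fin (m + 1)) : Fin (m + 1) :=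
  if h : x.val = 0 ∨ x.val = m then ⟨1 % (m + 1), Nat.mod_lt 1 (Nat.succ_pos m)⟩
  else ⟨x.val + 1, by have := x.isLt; push_neg at h; omega⟩

/-- The alternating order `≼` on maps `D_m → {0,1}`. -/
def Spre (m : ℕ) (α β : Fin (m + 1) → Bool) : Prop :=
  α 0 ≤ β 0 ∧ ∀ i : Fin (m + 1), i ≠ 0 → α i = β i

lemma gD_iter (m : ℕ) : ∀ j i : ℕ, (h1 : 1 ≤ i) → (h2 : i + j ≤ m) →
    (gD m)^[j] ⟨i, by omega⟩ = ⟨i + j, by omega⟩ := by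
  intro j
  induction j with
  | zero => intro i h1 h2; simp
  | succ j ih =>
    intro i h1 h2
    rw [Function.iterate_succ_apply]
    have hstep : gD m ⟨i, by omega⟩ = ⟨i + 1, by omega⟩ := by
      unfold gD
      rw [dif_neg (by simp; omega)]
    rw [hstep]
    have := ih (i + 1) (by omega) (by omega)
    convert this using 2
    omega

lemma gD_zero (m : ℕ) (hm : 1 ≤ m) : gD m 0 = ⟨1, by omega⟩ := by
  unfold gD
  rw [dif_pos (by simp)]
  simp [Nat.mod_eq_of_lt (by omega : 1 < m + 1)]

lemma gD_last (m : ℕ) (hm : 1 ≤ m) : gD m ⟨m, by omega⟩ = ⟨1, by omega⟩ := by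
  unfold gD
  rw [dif_pos (by simp)]
  simp [Nat.mod_eq_of_lt (by omega : 1 < m + 1)]

lemma iterate_split {X : Type*} (f : X → X) (n a b : ℕ) (h : n = a + b) (x : X) :
    f^[n] x = f^[a] (f^[b] x) := by
  rw [h, Function.iterate_add_apply]

lemma gD_iter_m (m : ℕ) (hm : 1 ≤ m) (x : Fin (m + 1)) :
    (gD m)^[m] x = if x = 0 then Fin.last m else x := by
  have hone : ∀ k : ℕ, (hk : k + 1 ≤ m) → (gD m)^[k] ⟨1, by omega⟩ = ⟨1 + k, by omega⟩ := by
    intro k hk; exact gD_iter m k 1 le_rfl (by omega)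
  by_cases hx : x = 0
  · subst hx
    simp only [if_pos rfl]
    rw [iterate_split (gD m) m (m - 1) 1 (by omega)]
    have h0 : (gD m)^[1] (0 : Fin (m+1)) = ⟨1, by omega⟩ := by
      simpa using gD_zero m hm
    rw [h0, hone (m - 1) (by omega)]
    ext; simp [Fin.last]; omega
  · simp only [if_neg hx]
    have hx1 : 1 ≤ x.val := by
      rcases Nat.eq_zero_or_pos x.val with h | h
      · exact absurd (Fin.ext h) hx
      · exact h
    by_cases hxm : x.val = m
    · have hxe : x = ⟨m, by omega⟩ := Fin.ext hxm
      rw [hxe, iterate_split (gD m) m (m - 1) 1 (by omega)]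
      have hl : (gD m)^[1] (⟨m, by omega⟩ : Fin (m+1)) = ⟨1, by omega⟩ := by
        simpa using gD_last m hm
      rw [hl, hone (m - 1) (by omega)]
      ext; simp; omega
    · -- 1 ≤ x.val < m
      rw [iterate_split (gD m) m x.val (m - x.val) (by omega)]
      have h1 : (gD m)^[m - x.val] x = ⟨m, by omega⟩ := by
        have hxe : x = ⟨x.val, x.isLt⟩ := Fin.ext rfl
        rw [hxe, gD_iter m (m - x.val) x.val hx1 (by omega)]
        ext; simp; omega
      rw [h1, iterate_split (gD m) x.val (x.val - 1) 1 (by omega)]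
      have hl : (gD m)^[1] (⟨m, by omega⟩ : Fin (m+1)) = ⟨1, by omega⟩ := by
        simpa using gD_last m hm
      rw [hl, hone (x.val - 1) (by omega)]
      ext; simp; omega

/-- Every order-preserving `α : D_m → {0,1}` satisfies `α ≼ u^[m] α`,
where `u α = α ∘ g`, so `u^[m] α = α ∘ g^[m]`. -/
theorem stmt_7 (m : ℕ) (hm : Odd m) (α : Fin (m + 1) → Bool)
    (hα : ∀ x y, Dle m x y → α x ≤ α y) :
    Spre m α (α ∘ (gD m)^[m]) := by
  have hm1 : 1 ≤ m := by
    obtain ⟨k, hk⟩ := hm; omega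
  constructor
  · show α 0 ≤ α ((gD m)^[m] 0)
    rw [gD_iter_m m hm1 0]
    simp only [if_pos rfl]
    exact hα 0 (Fin.last m) (Or.inr ⟨rfl, rfl⟩)
  · intro i hi
    show α i = α ((gD m)^[m] i)
    rw [gD_iter_m m hm1 i, if_neg hi]
end

section
/- Let X be a finite set with a partial order ≼ and a map u : X → X such that (a) x ≼ y implies u(x) = u(y), and (b) x ≼ u^m(x) for all x, for some fixed m ≥ 1. Then every ≼-connected component of X has a greatest element. -/
/-- If `u : X → X` on a finite poset satisfies `x ≼ y → u x = u y` and
`x ≼ u^[m] x` for all `x` (for some fixed `m ≥ 1`), then every `≼`-connected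
component of `X` has a greatest element. -/
theorem stmt_8 {X : Type*} [Finite X] [PartialOrder X] (u : X → X) (m : ℕ) (hm : 1 ≤ m)
    (h1 : ∀ x y : X, x ≤ y → u x = u y) (h2 : ∀ x : X, x ≤ u^[m] x) :
    ∀ x : X, ∃ t : X, Relation.ReflTransGen (fun a b => a ≤ b ∨ b ≤ a) x t ∧
      ∀ y : X, Relation.ReflTransGen (fun a b => a ≤ b ∨ b ≤ a) x y → y ≤ t := by
  intro x
  obtain ⟨k, rfl⟩ : ∃ k, m = k + 1 := ⟨m - 1, (Nat.succ_pred_eq_of_pos hm).symm⟩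
  have key : ∀ a b : X, a ≤ b ∨ b ≤ a → u^[k+1] a = u^[k+1] b := by
    intro a b hab
    have : u a = u b := by
      rcases hab with h | h
      · exact h1 a b h
      · exact (h1 b a h).symm
    rw [Function.iterate_succ_apply, Function.iterate_succ_apply, this]
  refine ⟨u^[k+1] x, Relation.ReflTransGen.single (Or.inl (h2 x)), ?_⟩
  intro y hxy
  have : u^[k+1] x = u^[k+1] y := by
    induction hxy with
    | refl => rfl
    | tail _ hbc ih => rw [ih]; exact key _ _ hbc
  calc y ≤ u^[k+1] y := h2 y
    _ = u^[k+1] x := this.symm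
end
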